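/- Let ζ = exp(2πi/3) and suppose A, B ∈ SU(3) satisfy B·A·B⁻¹·A⁻¹ = ζ·I, where I is the 3×3 identity matrix. Then the matrix A has the three distinct eigenvalues 1, ζ, ζ², and A³ = I; likewise B³ = I. -/
import Mathlib


open Matrix Polynomial

private lemma charpoly_fin_three'' (M : Matrix (Fin 3) (Fin 3) ℂ) :
    M.charpoly = X ^ 3 - C M.trace * X ^ 2 +
      C (M.adjugate 0 0 + M.adjugate 1 1 + M.adjugate 2 2) * X - C M.det := by
  rw [Matrix.charpoly, Matrix.det_fin_three, Matrix.trace_fin_three, Matrix.det_fin_three,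
    Matrix.adjugate_fin_three]
  simp only [charmatrix_apply_eq, charmatrix_apply_ne _ _ _ (by decide : (0 : Fin 3) ≠ 1),
    charmatrix_apply_ne _ _ _ (by decide : (0 : Fin 3) ≠ 2),
    charmatrix_apply_ne _ _ _ (by decide : (1 : Fin 3) ≠ 0),
    charmatrix_apply_ne _ _ _ (by decide : (1 : Fin 3) ≠ 2),
    charmatrix_apply_ne _ _ _ (by decide : (2 : Fin 3) ≠ 0),
    charmatrix_apply_ne _ _ _ (by decide : (2 : Fin 3) ≠ 1),
    Matrix.cons_val', Matrix.cons_val_zero, Matrix.cons_val_one, Matrix.head_cons,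
    Matrix.empty_val', Matrix.cons_val_fin_one, Matrix.head_fin_const, Matrix.cons_val_two,
    Matrix.tail_cons, Matrix.of_apply, Polynomial.C_add, Polynomial.C_sub, Polynomial.C_mul,
    Polynomial.C_neg]
  ring

private lemma mem_spectrum_iff_eval (M : Matrix (Fin 3) (Fin 3) ℂ) (μ : ℂ) :
    μ ∈ spectrum ℂ M ↔ M.charpoly.eval μ = 0 := by
  have hmap : (charmatrix M).map (evalRingHom μ) =
      algebraMap ℂ (Matrix (Fin 3) (Fin 3) ℂ) μ - M := by
    ext i j
    by_cases h : i = j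
    · subst h
      simp [charmatrix_apply_eq, Matrix.algebraMap_matrix_apply]
    · simp [charmatrix_apply_ne _ _ _ h, Matrix.algebraMap_matrix_apply, h]
  have hdet : (algebraMap ℂ (Matrix (Fin 3) (Fin 3) ℂ) μ - M).det = M.charpoly.eval μ := by
    rw [← hmap, Matrix.charpoly]
    exact ((evalRingHom μ).map_det (charmatrix M)).symm
  rw [spectrum.mem_iff, Matrix.isUnit_iff_isUnit_det, hdet, isUnit_iff_ne_zero, not_not]

private lemma key_charpoly (η : ℂ) (hη1 : η ≠ 1)
    (M N : Matrix (Fin 3) (Fin 3) ℂ) (hMu : Mᴴ * M = 1) (hMd : M.det = 1)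
    (hN : IsUnit N.det) (hsim : N * M * N⁻¹ = η • M) :
    M.charpoly = X ^ 3 - 1 := by
  -- trace is zero
  have htr : M.trace = 0 := by
    have h1 : (N * M * N⁻¹).trace = M.trace := by
      rw [Matrix.trace_mul_comm, ← Matrix.mul_assoc, Matrix.nonsing_inv_mul N hN, Matrix.one_mul]
    rw [hsim, Matrix.trace_smul] at h1
    have : (η - 1) * M.trace = 0 := by
      have h2 : η * M.trace = M.trace := by simpa using h1
      rw [sub_mul, one_mul, h2, sub_self]
    rcases mul_eq_zero.mp this with h | h
    · exact absurd (sub_eq_zero.mp h) hη1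
    · exact h
  -- adjugate equals conjugate transpose
  have hinv : M⁻¹ = Mᴴ := Matrix.inv_eq_left_inv hMu
  have hadj : M.adjugate = Mᴴ := by
    rw [← hinv, Matrix.inv_def, hMd, Ring.inverse_one, one_smul]
  have he2 : M.adjugate 0 0 + M.adjugate 1 1 + M.adjugate 2 2 = 0 := by
    rw [hadj]
    have : M 0 0 + M 1 1 + M 2 2 = 0 := by
      rw [← Matrix.trace_fin_three]; exact htr
    simp only [Matrix.conjTranspose_apply, ← star_add]
    rw [this, star_zero]
  rw [charpoly_fin_three'' M, htr, he2, hMd]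
  simp

/-- Let `ζ = exp(2πi/3)` and let `A, B` be 3×3 complex unitary matrices
of determinant 1 (elements of SU(3)) whose commutator satisfies `B·A·B⁻¹·A⁻¹ = ζ·I`.
Then `A` has the three distinct eigenvalues `1, ζ, ζ²` (i.e. its spectrum is `{1, ζ, ζ²}`,
a set of three distinct elements) and `A³ = I`; likewise `B³ = I`. -/
theorem stmt11 (ζ : ℂ) (hζ : ζ = Complex.exp (2 * (Real.pi : ℂ) * Complex.I / 3))
    (A B : Matrix (Fin 3) (Fin 3) ℂ)
    (hAu : Aᴴ * A = 1) (hAd : A.det = 1)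
    (hBu : Bᴴ * B = 1) (hBd : B.det = 1)
    (hcomm : B * A * B⁻¹ * A⁻¹ = ζ • (1 : Matrix (Fin 3) (Fin 3) ℂ)) :
    spectrum ℂ A = {1, ζ, ζ ^ 2} ∧
    (1 : ℂ) ≠ ζ ∧ ζ ≠ ζ ^ 2 ∧ (1 : ℂ) ≠ ζ ^ 2 ∧
    A ^ 3 = 1 ∧ B ^ 3 = 1 := by
  -- ζ³ = 1
  have hζ3 : ζ ^ 3 = 1 := by
    rw [hζ, ← Complex.exp_nat_mul]
    rw [show (3 : ℕ) * (2 * (Real.pi : ℂ) * Complex.I / 3) = 2 * (Real.pi : ℂ) * Complex.I by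
      push_cast; ring]
    exact Complex.exp_two_pi_mul_I
  -- ζ ≠ 1
  have hζ1 : ζ ≠ 1 := by
    have hre : ζ.re = Real.cos (2 * Real.pi / 3) := by
      rw [hζ, show 2 * (Real.pi : ℂ) * Complex.I / 3 = ((2 * Real.pi / 3 : ℝ) : ℂ) * Complex.I by
        push_cast; ring]
      exact Complex.exp_ofReal_mul_I_re _
    have hcos : Real.cos (2 * Real.pi / 3) = -(1 / 2) := by
      rw [show 2 * Real.pi / 3 = Real.pi - Real.pi / 3 by ring, Real.cos_pi_sub,
        Real.cos_pi_div_three]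
    intro h
    rw [h] at hre
    rw [hcos] at hre
    norm_num at hre
  have hζ2 : ζ ^ 2 ≠ 1 := by
    intro h
    apply hζ1
    calc ζ = ζ * 1 := (mul_one ζ).symm
    _ = ζ * ζ ^ 2 := by rw [h]
    _ = ζ ^ 3 := by ring
    _ = 1 := hζ3
  have h01 : 1 + ζ + ζ ^ 2 = 0 := by
    have : (ζ - 1) * (1 + ζ + ζ ^ 2) = 0 := by linear_combination hζ3
    rcases mul_eq_zero.mp this with h | h
    · exact absurd (sub_eq_zero.mp h) hζ1
    · exact h
  have hAdet : IsUnit A.det := by rw [hAd]; exact isUnit_one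
  have hBdet : IsUnit B.det := by rw [hBd]; exact isUnit_one
  -- B * A * B⁻¹ = ζ • A
  have hsimA : B * A * B⁻¹ = ζ • A := by
    have := congrArg (· * A) hcomm
    simpa [Matrix.mul_assoc, Matrix.nonsing_inv_mul A hAdet, Matrix.smul_mul] using this
  -- A * B * A⁻¹ = ζ² • B
  have hBA : B * A = ζ • (A * B) := by
    have := congrArg (· * B) hsimA
    simpa [Matrix.mul_assoc, Matrix.nonsing_inv_mul B hBdet, Matrix.smul_mul] using this
  have hsimB : A * B * A⁻¹ = ζ ^ 2 • B := by
    have hAB : A * B = ζ ^ 2 • (B * A) := by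
      rw [hBA, smul_smul]
      rw [show ζ ^ 2 * ζ = ζ ^ 3 by ring, hζ3, one_smul]
    rw [hAB, Matrix.smul_mul, Matrix.mul_assoc, Matrix.mul_nonsing_inv A hAdet, Matrix.mul_one]
  have hζ2ne1 : ζ ^ 2 ≠ 1 := hζ2
  -- characteristic polynomials
  have hcpA : A.charpoly = X ^ 3 - 1 := key_charpoly ζ hζ1 A B hAu hAd hBdet hsimA
  have hcpB : B.charpoly = X ^ 3 - 1 := key_charpoly (ζ ^ 2) hζ2ne1 B A hBu hBd hAdet hsimB
  -- cubes are identity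
  have hA3 : A ^ 3 = 1 := by
    have h := A.aeval_self_charpoly
    rw [hcpA] at h
    have h2 : A ^ 3 - 1 = 0 := by simpa using h
    exact sub_eq_zero.mp h2
  have hB3 : B ^ 3 = 1 := by
    have h := B.aeval_self_charpoly
    rw [hcpB] at h
    have h2 : B ^ 3 - 1 = 0 := by simpa using h
    exact sub_eq_zero.mp h2
  -- spectrum
  have hfactor : ∀ μ : ℂ, μ ^ 3 - 1 = (μ - 1) * (μ - ζ) * (μ - ζ ^ 2) := by
    intro μ
    linear_combination (μ ^ 2 - μ) * h01 + (1 - μ) * hζ3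
  have hspec : spectrum ℂ A = {1, ζ, ζ ^ 2} := by
    ext μ
    rw [mem_spectrum_iff_eval, hcpA]
    simp only [eval_sub, eval_pow, eval_X, eval_one, Set.mem_insert_iff, Set.mem_singleton_iff]
    rw [hfactor μ]
    constructor
    · intro h
      rcases mul_eq_zero.mp h with h | h
      · rcases mul_eq_zero.mp h with h | h
        · exact Or.inl (sub_eq_zero.mp h)
        · exact Or.inr (Or.inl (sub_eq_zero.mp h))
      · exact Or.inr (Or.inr (sub_eq_zero.mp h))
    · rintro (rfl | rfl | rfl) <;> ring
  refine ⟨hspec, fun h => hζ1 h.symm, ?_, fun h => hζ2 h.symm, hA3, hB3⟩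
  intro h
  apply hζ1
  have : ζ * ζ = ζ * 1 := by
    calc ζ * ζ = ζ ^ 2 := by ring
    _ = ζ := h.symm
    _ = ζ * 1 := (mul_one ζ).symm
  have hζ0 : ζ ≠ 0 := by
    intro h0
    rw [h0] at hζ3
    norm_num at hζ3
  have := mul_left_cancel₀ hζ0 this
  -- ζ = 1
  exact this
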